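/- For all natural numbers n and k, ∫_ℝ x^{n+2k} · fₙ(x) dx = (−1)^n · √(2π) · (n+2k)! / (2^k · k!), and ∫_ℝ x^{j} · fₙ(x) dx = 0 whenever j − n is odd or j < n, where fₙ denotes the n-th derivative of x ↦ exp(−x²/2). Thus the moment sequence of the n-th classical eigenfunction is, up to the scalar (−1)^n·n·√(2π), the sequence a_{n+2k,n} = (n+2k)!/(n·k!·2^k). -/

import Mathlib

/-!
Write `M n j = ∫ x^j fₙ(x) dx`. Since `fₙ` is a polynomial times the Gaussian, all boundary terms
vanish and integration by parts gives `M (n+1) 0 = 0` and `M (n+1) (j+1) = -(j+1) M n j`.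
As `f₁ = -x f₀`, the case `n = 0` of the latter reads `M 0 (j+2) = (j+1) M 0 j`; together with
`M 0 0 = √(2π)` this determines every moment.
-/

open MeasureTheory Real

/-- `gaussDeriv n` is the `n`-th derivative of `x ↦ exp (-x²/2)`. -/
noncomputable def gaussDeriv (n : ℕ) : ℝ → ℝ :=
  iteratedDeriv n (fun x : ℝ => Real.exp (-(x ^ 2) / 2))

open Polynomial

theorem integrable_aeval_mul_exp_neg_mul_sq {b : ℝ} (hb : 0 < b) (p : ℝ[X]) :
    Integrable fun x : ℝ => aeval x p * exp (-b * x ^ 2) := by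
  induction p using Polynomial.induction_on' with
  | add p q hp hq =>
    refine (hp.add hq).congr (.of_forall fun x => ?_)
    simp only [Pi.add_apply, map_add, add_mul]
  | monomial i a =>
    have hi : Integrable fun x : ℝ => x ^ (i : ℝ) * exp (-b * x ^ 2) :=
      integrable_rpow_mul_exp_neg_mul_sq hb (by linarith [(i.cast_nonneg : (0 : ℝ) ≤ i)])
    simpa only [aeval_monomial, Algebra.algebraMap_self, RingHom.id_apply, rpow_natCast, mul_assoc]
      using hi.const_mul a

theorem gaussDeriv_eq_hermite (n : ℕ) (x : ℝ) :
    gaussDeriv n x = (-1 : ℝ) ^ n * aeval x (hermite n) * exp (-(x ^ 2 / 2)) := by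
  simp only [gaussDeriv, iteratedDeriv_eq_iterate, neg_div, deriv_gaussian_eq_hermite_mul_gaussian]

theorem integrable_pow_mul_gaussDeriv (j n : ℕ) :
    Integrable fun x : ℝ => x ^ j * gaussDeriv n x := by
  have h := (integrable_aeval_mul_exp_neg_mul_sq one_half_pos
    (X ^ j * (hermite n).map (algebraMap ℤ ℝ))).const_mul ((-1 : ℝ) ^ n)
  refine h.congr (.of_forall fun x => ?_)
  simp only [gaussDeriv_eq_hermite, map_mul, map_pow, aeval_X, aeval_map_algebraMap]
  ring_nf

theorem hasDerivAt_gaussDeriv (n : ℕ) (x : ℝ) :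
    HasDerivAt (gaussDeriv n) (gaussDeriv (n + 1) x) x := by
  have hsmooth : ContDiff ℝ ⊤ fun x : ℝ => exp (-(x ^ 2) / 2) := by fun_prop
  rw [gaussDeriv, gaussDeriv, iteratedDeriv_succ]
  exact (hsmooth.differentiable_iteratedDeriv n (WithTop.coe_lt_top _) x).hasDerivAt

theorem integral_pow_succ_mul_of_hasDerivAt {v v' : ℝ → ℝ} (j : ℕ)
    (hv : ∀ x, HasDerivAt v (v' x) x) (hv'_int : Integrable fun x => x ^ (j + 1) * v' x)
    (hv_int : Integrable fun x => x ^ j * v x) (hxv_int : Integrable fun x => x ^ (j + 1) * v x) :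
    ∫ x, x ^ (j + 1) * v' x = -(j + 1 : ℝ) * ∫ x, x ^ j * v x := by
  have hpow (x : ℝ) : HasDerivAt (· ^ (j + 1)) ((j + 1 : ℝ) * x ^ j) x := by
    simpa using hasDerivAt_pow (j + 1) x
  rw [integral_mul_deriv_eq_deriv_mul_of_integrable (fun x _ ↦ hpow x) (fun x _ ↦ hv x) hv'_int
    (by simpa only [Pi.mul_def, mul_assoc] using hv_int.const_mul (j + 1 : ℝ)) hxv_int,
    ← integral_const_mul]
  simp only [neg_mul, integral_neg, mul_assoc]

theorem integral_pow_succ_mul_gaussDeriv_succ (n j : ℕ) :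
    ∫ x, x ^ (j + 1) * gaussDeriv (n + 1) x = -(j + 1 : ℝ) * ∫ x, x ^ j * gaussDeriv n x :=
  integral_pow_succ_mul_of_hasDerivAt j (hasDerivAt_gaussDeriv n)
    (integrable_pow_mul_gaussDeriv _ _) (integrable_pow_mul_gaussDeriv _ _)
    (integrable_pow_mul_gaussDeriv _ _)

theorem integral_gaussDeriv_succ (n : ℕ) : ∫ x, gaussDeriv (n + 1) x = 0 := by
  simpa using integral_eq_zero_of_hasDerivAt_of_integrable (hasDerivAt_gaussDeriv n)
    (by simpa using integrable_pow_mul_gaussDeriv 0 (n + 1))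
    (by simpa using integrable_pow_mul_gaussDeriv 0 n)

theorem gaussDeriv_one (x : ℝ) : gaussDeriv 1 x = -x * gaussDeriv 0 x := by
  simp only [gaussDeriv_eq_hermite, hermite_one, hermite_zero, aeval_X, map_one]
  ring

theorem integral_gaussDeriv_zero : ∫ x, gaussDeriv 0 x = √(2 * π) := by
  have h := integral_gaussian (1 / 2)
  rw [show π / (1 / 2) = 2 * π by ring] at h
  rw [← h]
  congr 1 with x
  rw [gaussDeriv, iteratedDeriv_zero]
  ring_nf

theorem integral_pow_add_two_mul_gaussDeriv_zero (j : ℕ) :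
    ∫ x, x ^ (j + 2) * gaussDeriv 0 x = (j + 1 : ℝ) * ∫ x, x ^ j * gaussDeriv 0 x := by
  have h := integral_pow_succ_mul_gaussDeriv_succ 0 j
  simp only [zero_add, gaussDeriv_one, neg_mul, mul_neg, ← mul_assoc, ← pow_succ,
    integral_neg] at h
  linarith

theorem integral_pow_two_mul_mul_gaussDeriv_zero (k : ℕ) :
    ∫ x, x ^ (2 * k) * gaussDeriv 0 x = √(2 * π) * (2 * k).factorial / (2 ^ k * k.factorial) := by
  induction k with
  | zero => simpa using integral_gaussDeriv_zero
  | succ k ih =>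
    rw [mul_add_one, integral_pow_add_two_mul_gaussDeriv_zero, ih, Nat.factorial_succ,
      Nat.factorial_succ, Nat.factorial_succ, pow_succ]
    push_cast
    field_simp
    ring

theorem integral_pow_two_mul_add_one_mul_gaussDeriv_zero (k : ℕ) :
    ∫ x, x ^ (2 * k + 1) * gaussDeriv 0 x = 0 := by
  induction k with
  | zero =>
    simpa [gaussDeriv_one, integral_neg] using integral_gaussDeriv_succ 0
  | succ k ih =>
    rw [mul_add_one, add_right_comm, integral_pow_add_two_mul_gaussDeriv_zero, ih, mul_zero]

theorem integral_pow_add_two_mul_mul_gaussDeriv (n k : ℕ) :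
    ∫ x, x ^ (n + 2 * k) * gaussDeriv n x =
      (-1 : ℝ) ^ n * √(2 * π) * (n + 2 * k).factorial / (2 ^ k * k.factorial) := by
  induction n with
  | zero => simpa using integral_pow_two_mul_mul_gaussDeriv_zero k
  | succ n ih =>
    rw [add_right_comm, integral_pow_succ_mul_gaussDeriv_succ, ih, Nat.factorial_succ]
    push_cast
    ring

theorem integral_pow_mul_gaussDeriv_eq_zero {n j : ℕ} (h : j % 2 ≠ n % 2 ∨ j < n) :
    ∫ x, x ^ j * gaussDeriv n x = 0 := by
  induction n generalizing j with
  | zero =>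
    obtain ⟨k, rfl⟩ : ∃ k, j = 2 * k + 1 := ⟨j / 2, by omega⟩
    exact integral_pow_two_mul_add_one_mul_gaussDeriv_zero k
  | succ n ih =>
    cases j with
    | zero => simpa using integral_gaussDeriv_succ n
    | succ j => rw [integral_pow_succ_mul_gaussDeriv_succ, ih (by omega), mul_zero]

/-- Moments of the `n`-th classical eigenfunction `fₙ` (the `n`-th derivative of the
Gaussian): `∫ x^{n+2k} fₙ(x) dx = (−1)^n √(2π) (n+2k)!/(2^k k!)`, and the `j`-th moment
vanishes whenever `j − n` is odd (i.e. `j` and `n` have different parity) or `j < n`. -/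
theorem gaussDeriv_moments (n k : ℕ) :
    (∫ x : ℝ, x ^ (n + 2 * k) * gaussDeriv n x =
      (-1 : ℝ) ^ n * Real.sqrt (2 * Real.pi) * (n + 2 * k).factorial /
        (2 ^ k * k.factorial)) ∧
    ∀ j : ℕ, (j % 2 ≠ n % 2 ∨ j < n) → ∫ x : ℝ, x ^ j * gaussDeriv n x = 0 :=
  ⟨integral_pow_add_two_mul_mul_gaussDeriv n k, fun _ ↦ integral_pow_mul_gaussDeriv_eq_zero⟩
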